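/- In the setting of the universal regular conditional distribution corollary (i.e., with K_ε ⊆ X compact, X_#ℙ(K_ε) ≥ 1−ε, and max_{x∈K_ε} W₁(ℙ^Y_x, Σ_{n=1}^N (Softmax_N(f̂(φ(x))))_n μ̂_n) ≤ ε): for every Borel-measurable function f : Y × X → ℝ which is uniformly Lipschitz in its first argument (there is L > 0 with |f(y₁,x) − f(y₂,x)| ≤ L·d_Y(y₁,y₂) for all x, y₁, y₂) and uniformly bounded (sup_{(y,x)} |f(y,x)| < ∞), it holds ℙ-almost surely for every x ∈ K_ε that | E[f(Y,X) | X = x] − ∫_Y f(y,x) d( Σ_{n=1}^N (Softmax_N(f̂(φ(x))))_n μ̂_n )(y) | ≤ M·ε, where M > 0 is a constant independent of ε, K_ε, N, and the measures μ̂₁,…,μ̂_N. -/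

import Mathlib

open MeasureTheory ENNReal

noncomputable section

/-- `ℝ^d` with the Euclidean norm. -/
abbrev Euc (d : ℕ) : Type := EuclideanSpace ℝ (Fin d)

/-- The Wasserstein-1 distance (with values in `ℝ≥0∞`) between two Borel measures on a
metric space: the infimum over all couplings of the expected distance. -/
def W1 {Y : Type*} [MeasurableSpace Y] [PseudoMetricSpace Y] (μ ν : Measure Y) : ℝ≥0∞ :=
  ⨅ (π : Measure (Y × Y)) (_ : π.map Prod.fst = μ) (_ : π.map Prod.snd = ν),
    ∫⁻ p, edist p.1 p.2 ∂π

/-- `μ ∈ P₁(Y)`: a Borel probability measure with finite first moment. -/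
def MemP1 {Y : Type*} [MeasurableSpace Y] [PseudoMetricSpace Y] (μ : Measure Y) : Prop :=
  IsProbabilityMeasure μ ∧ ∃ y₀ : Y, ∫⁻ y, edist y₀ y ∂μ ≠ ⊤

/-- `μ ∈ P_q(Y)`: a Borel probability measure with finite `q`-th moment. -/
def MemPq {Y : Type*} [MeasurableSpace Y] [PseudoMetricSpace Y] (q : ℝ) (μ : Measure Y) : Prop :=
  IsProbabilityMeasure μ ∧ ∃ y₀ : Y, ∫⁻ y, edist y₀ y ^ q ∂μ ≠ ⊤

/-- Continuity of a measure-valued map, with respect to the Wasserstein-1 distance on its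
codomain. -/
def W1Continuous {X Y : Type*} [PseudoMetricSpace X] [MeasurableSpace Y] [PseudoMetricSpace Y]
    (f : X → Measure Y) : Prop :=
  ∀ x : X, ∀ ε : ℝ, 0 < ε → ∃ δ : ℝ, 0 < δ ∧ ∀ x' : X, dist x x' < δ →
    W1 (f x) (f x') < ENNReal.ofReal ε

/-- A feedforward neural network (multi-layer perceptron): `depth` hidden layers, layer sizes
`dims`, affine maps given by `weight` and `bias`; the activation is applied componentwise after
every affine layer except the last one. -/
structure MLP (σ : ℝ → ℝ) where
  depth : ℕ
  dims : ℕ → ℕ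
  weight : (j : ℕ) → Matrix (Fin (dims (j + 1))) (Fin (dims j)) ℝ
  bias : (j : ℕ) → Fin (dims (j + 1)) → ℝ

/-- Forward pass through the first `j` layers of the network. -/
def MLP.forward {σ : ℝ → ℝ} (net : MLP σ) :
    (j : ℕ) → (Fin (net.dims 0) → ℝ) → Fin (net.dims j) → ℝ
  | 0, x => x
  | j + 1, x => fun i =>
      let t := (∑ k, net.weight j i k * MLP.forward net j x k) + net.bias j i
      if j + 1 ≤ net.depth then σ t else t

/-- The function `ℝ^d → ℝ^N` realized by the network. -/
def MLP.realize {σ : ℝ → ℝ} (net : MLP σ) {d N : ℕ}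
    (h0 : net.dims 0 = d) (hN : net.dims (net.depth + 1) = N)
    (x : Fin d → ℝ) (i : Fin N) : ℝ :=
  net.forward (net.depth + 1) (fun k => x (Fin.cast h0 k)) (Fin.cast hN.symm i)

/-- `f : ℝ^d → ℝ^N` is realized by a network with activation `σ`, depth `J` and width
at most `W`. -/
def RealizedByNN (σ : ℝ → ℝ) {d N : ℕ} (f : (Fin d → ℝ) → Fin N → ℝ) (J W : ℕ) : Prop :=
  ∃ net : MLP σ, ∃ (h0 : net.dims 0 = d) (hN : net.dims (net.depth + 1) = N),
    net.depth = J ∧ (∀ j ≤ net.depth + 1, net.dims j ≤ W) ∧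
    ∀ x, f x = net.realize h0 hN x

/-- `f ∈ NN^σ_{d,N}`: `f` is realized by some feedforward network with activation `σ`. -/
def IsNN (σ : ℝ → ℝ) {d N : ℕ} (f : (Fin d → ℝ) → Fin N → ℝ) : Prop :=
  ∃ J W : ℕ, RealizedByNN σ f J W

/-- The softmax function `ℝ^N → Δ_N`. -/
def softmax {N : ℕ} (x : Fin N → ℝ) (n : Fin N) : ℝ :=
  Real.exp (x n) / ∑ k, Real.exp (x k)

/-- The mixture `Σ_n w_n • μ_n` of the measures `μ_n` with weights `w_n`. -/
def mixture {Y : Type*} [MeasurableSpace Y] {N : ℕ} (w : Fin N → ℝ) (μ : Fin N → Measure Y) :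
    Measure Y :=
  ∑ n, ENNReal.ofReal (w n) • μ n

/-- Membership in the standard `N`-simplex. -/
def inSimplex {N : ℕ} (lam : Fin N → ℝ) : Prop := (∀ n, 0 ≤ lam n) ∧ ∑ n, lam n = 1

/-- The Kidger–Lyons condition on an activation function: continuous, non-affine, and
differentiable at at least one point with nonzero derivative there. -/
def KidgerLyons (σ : ℝ → ℝ) : Prop :=
  Continuous σ ∧ (¬ ∃ a b : ℝ, ∀ x : ℝ, σ x = a * x + b) ∧
  ∃ x₀ : ℝ, DifferentiableAt ℝ σ x₀ ∧ deriv σ x₀ ≠ 0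

/-- The generalized inverse `ω⁻(t) = sup {s : ω s ≤ t}` of a modulus of continuity. -/
def geninv (ω : ℝ → ℝ) (t : ℝ) : ℝ := sSup {s : ℝ | ω s ≤ t}

/-- The model class `N^{σ:*}_{φ,D}`: all maps
`x ↦ Σ_{n=1}^N (Softmax_N (fh (φ x)))_n • μh_n` with `fh ∈ NN^σ_{d,N}` and `μh_n ∈ D`. -/
def InModelClass {X Y : Type*} [PseudoMetricSpace X] [MeasurableSpace Y] (σ : ℝ → ℝ)
    {d : ℕ} (φ : X → Euc d) (D : Set (Measure Y)) (F : X → Measure Y) : Prop :=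
  ∃ N : ℕ, 0 < N ∧ ∃ (fh : (Fin d → ℝ) → Fin N → ℝ) (μh : Fin N → Measure Y),
    IsNN σ fh ∧ (∀ n, μh n ∈ D) ∧
    ∀ x, F x = mixture (softmax (fh (fun i => φ x i))) μh

/-- The metric `d_∞` of uniform convergence on compacts on `C(X, P₁(Y))`, relative to the
base point `x₀` (with values in `ℝ≥0∞`). -/
def dInfty {X Y : Type*} [PseudoMetricSpace X] [MeasurableSpace Y] [PseudoMetricSpace Y]
    (x₀ : X) (f g : X → Measure Y) : ℝ≥0∞ :=
  ∑' n : ℕ, (2 : ℝ≥0∞)⁻¹ ^ (n + 1) *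
    min 1 (⨆ x ∈ Metric.closedBall x₀ ((n : ℝ) + 1), W1 (f x) (g x))

end

/-!
Integrating a coupling `π` of `μ` and `ν` turns `∫ h dμ - ∫ h dν` into `∫ (h y₁ - h y₂) dπ`, which
the Lipschitz bound controls by `L ∫ d(y₁, y₂) dπ`; taking the infimum over couplings gives
`|∫ h dμ - ∫ h dν| ≤ L W₁(μ, ν)`. Applied to `h = g(·, x)`, `μ = ℙ^Y_x` and the learned mixture, this
gives the bound with `M = L` at every `x ∈ K`.
-/

section Wasserstein

variable {Y : Type*} [PseudoMetricSpace Y] [MeasurableSpace Y] {μ ν : Measure Y}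
  [IsFiniteMeasure μ] {h : Y → ℝ} {C L : ℝ}

lemma enorm_integral_sub_integral_le_of_coupling (hmeas : Measurable h) (hC : ∀ y, |h y| ≤ C)
    (hlip : ∀ y₁ y₂, |h y₁ - h y₂| ≤ L * dist y₁ y₂) {π : Measure (Y × Y)}
    (hπ₁ : π.map Prod.fst = μ) (hπ₂ : π.map Prod.snd = ν) :
    ‖(∫ y, h y ∂μ) - ∫ y, h y ∂ν‖ₑ ≤ ENNReal.ofReal L * ∫⁻ p, edist p.1 p.2 ∂π := by
  have : IsFiniteMeasure (π.map Prod.fst) := hπ₁ ▸ inferInstance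
  have : IsFiniteMeasure π := Measure.isFiniteMeasure_of_map measurable_fst.aemeasurable
  have hint : ∀ f : Y × Y → Y, Measurable f → Integrable (fun p => h (f p)) π := fun f hf =>
    .of_bound (hmeas.comp hf).aestronglyMeasurable C (.of_forall fun p => hC (f p))
  calc ‖(∫ y, h y ∂μ) - ∫ y, h y ∂ν‖ₑ = ‖∫ p, (h p.1 - h p.2) ∂π‖ₑ := by
        rw [← hπ₁, ← hπ₂, integral_map measurable_fst.aemeasurable hmeas.aestronglyMeasurable,
          integral_map measurable_snd.aemeasurable hmeas.aestronglyMeasurable,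
          integral_sub (hint _ measurable_fst) (hint _ measurable_snd)]
    _ ≤ ∫⁻ p, ‖h p.1 - h p.2‖ₑ ∂π := enorm_integral_le_lintegral_enorm _
    _ ≤ ∫⁻ p, ENNReal.ofReal L * edist p.1 p.2 ∂π := lintegral_mono fun p => by
        rw [Real.enorm_eq_ofReal_abs, edist_dist, ← ENNReal.ofReal_mul' dist_nonneg]
        exact ENNReal.ofReal_le_ofReal (hlip p.1 p.2)
    _ = ENNReal.ofReal L * ∫⁻ p, edist p.1 p.2 ∂π := lintegral_const_mul' _ _ ofReal_ne_top

lemma enorm_integral_sub_integral_le_mul_W1 (hmeas : Measurable h) (hC : ∀ y, |h y| ≤ C)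
    (hL : 0 < L) (hlip : ∀ y₁ y₂, |h y₁ - h y₂| ≤ L * dist y₁ y₂) :
    ‖(∫ y, h y ∂μ) - ∫ y, h y ∂ν‖ₑ ≤ ENNReal.ofReal L * W1 μ ν := by
  simp only [W1, ENNReal.mul_iInf_of_ne (ENNReal.ofReal_pos.2 hL).ne' ofReal_ne_top]
  exact le_iInf₂ fun π hπ₁ => le_iInf fun hπ₂ =>
    enorm_integral_sub_integral_le_of_coupling hmeas hC hlip hπ₁ hπ₂

lemma abs_integral_sub_integral_le_of_W1_le (hmeas : Measurable h) (hC : ∀ y, |h y| ≤ C)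
    (hL : 0 < L) (hlip : ∀ y₁ y₂, |h y₁ - h y₂| ≤ L * dist y₁ y₂) {ε : ℝ} (hε : 0 ≤ ε)
    (hW : W1 μ ν ≤ ENNReal.ofReal ε) :
    |(∫ y, h y ∂μ) - ∫ y, h y ∂ν| ≤ L * ε := by
  rw [← ENNReal.ofReal_le_ofReal_iff (by positivity), ← Real.enorm_eq_ofReal_abs,
    ENNReal.ofReal_mul hL.le]
  exact (enorm_integral_sub_integral_le_mul_W1 hmeas hC hL hlip).trans (by gcongr)

end Wasserstein

theorem statement11_general
    {X Y Ω : Type*} [MetricSpace X] [MeasurableSpace X]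
    [MetricSpace Y] [MeasurableSpace Y]
    [MeasurableSpace Ω] (P : Measure Ω)
    (RX : Ω → X)
    (κ : X → Measure Y) (hκprob : ∀ x, IsProbabilityMeasure (κ x))
    {d : ℕ} (σ : ℝ → ℝ)
    (φ : X → Euc d)
    -- the integrand: Borel, uniformly Lipschitz in its first argument, uniformly bounded
    (g : Y × X → ℝ) (hgmeas : Measurable g)
    (L : ℝ) (hL : 0 < L)
    (hgLip : ∀ (x : X) (y₁ y₂ : Y), |g (y₁, x) - g (y₂, x)| ≤ L * dist y₁ y₂)
    (hgBdd : ∃ Cb : ℝ, ∀ (y : Y) (x : X), |g (y, x)| ≤ Cb) :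
    ∃ M : ℝ, 0 < M ∧
      ∀ ε : ℝ, 0 < ε → ε < 1 →
        ∀ K : Set X, IsCompact K → 1 - ENNReal.ofReal ε ≤ P.map RX K →
          ∀ N : ℕ, 0 < N →
            ∀ μh : Fin N → Measure Y, (∀ n, MemP1 (μh n)) →
              ∀ fh : (Fin d → ℝ) → Fin N → ℝ, IsNN σ fh →
                (∀ x ∈ K, W1 (κ x) (mixture (softmax (fh (fun i => φ x i))) μh)
                  ≤ ENNReal.ofReal ε) →
                ∀ᵐ x ∂(P.map RX), x ∈ K →
                  |(∫ y, g (y, x) ∂(κ x)) -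
                      (∫ y, g (y, x) ∂(mixture (softmax (fh (fun i => φ x i))) μh))|
                    ≤ M * ε := by
  obtain ⟨C, hC⟩ := hgBdd
  refine ⟨L, hL, fun ε hε _ K _ _ N _ μh _ fh _ hW => .of_forall fun x hx => ?_⟩
  exact abs_integral_sub_integral_le_of_W1_le (hgmeas.comp (measurable_id.prodMk measurable_const))
    (fun y => hC y x) hL (hgLip x) hε.le (hW x hx)

open MeasureTheory ENNReal in
/-- **Generic conditional expectations** (Corollary 4.2): in the setting of the universal regular
conditional distribution corollary, for any Borel `g : Y × X → ℝ` uniformly Lipschitz in its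
first argument and uniformly bounded, the conditional expectation
`E[g(Y,X)|X=x] = ∫ g(y,x) dℙ^Y_x(y)` is within `M ε` of the integral of `g(·,x)` against the
learned mixture, a.s. for `x ∈ K_ε`, with `M` independent of `ε`, `K_ε`, `N` and the `μh`'s. -/
theorem statement11
    {X Y Ω : Type*} [MetricSpace X] [CompleteSpace X] [TopologicalSpace.SeparableSpace X]
    [LocallyCompactSpace X] [MeasurableSpace X] [BorelSpace X]
    [MetricSpace Y] [CompleteSpace Y] [TopologicalSpace.SeparableSpace Y]
    [MeasurableSpace Y] [BorelSpace Y]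
    [MeasurableSpace Ω] (P : Measure Ω) [IsProbabilityMeasure P]
    (RX : Ω → X) (RY : Ω → Y) (hRX : Measurable RX) (hRY : Measurable RY)
    (κ : X → Measure Y) (hκmeas : Measurable κ) (hκprob : ∀ x, IsProbabilityMeasure (κ x))
    (hκdisint : ∀ (A : Set X) (B : Set Y), MeasurableSet A → MeasurableSet B →
      P {ω | RX ω ∈ A ∧ RY ω ∈ B} = ∫⁻ x in A, κ x B ∂(P.map RX))
    (hYbdd : Bornology.IsBounded (Set.univ : Set Y))
    (hκP1 : ∀ x, MemP1 (κ x))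
    {d : ℕ} (σ : ℝ → ℝ) (hσ : KidgerLyons σ)
    (φ : X → Euc d) (hφc : Continuous φ) (hφinj : Function.Injective φ)
    -- the integrand: Borel, uniformly Lipschitz in its first argument, uniformly bounded
    (g : Y × X → ℝ) (hgmeas : Measurable g)
    (L : ℝ) (hL : 0 < L)
    (hgLip : ∀ (x : X) (y₁ y₂ : Y), |g (y₁, x) - g (y₂, x)| ≤ L * dist y₁ y₂)
    (hgBdd : ∃ Cb : ℝ, ∀ (y : Y) (x : X), |g (y, x)| ≤ Cb) :
    ∃ M : ℝ, 0 < M ∧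
      ∀ ε : ℝ, 0 < ε → ε < 1 →
        ∀ K : Set X, IsCompact K → 1 - ENNReal.ofReal ε ≤ P.map RX K →
          ∀ N : ℕ, 0 < N →
            ∀ μh : Fin N → Measure Y, (∀ n, MemP1 (μh n)) →
              ∀ fh : (Fin d → ℝ) → Fin N → ℝ, IsNN σ fh →
                (∀ x ∈ K, W1 (κ x) (mixture (softmax (fh (fun i => φ x i))) μh)
                  ≤ ENNReal.ofReal ε) →
                ∀ᵐ x ∂(P.map RX), x ∈ K →
                  |(∫ y, g (y, x) ∂(κ x)) -
                      (∫ y, g (y, x) ∂(mixture (softmax (fh (fun i => φ x i))) μh))|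
                    ≤ M * ε :=
  statement11_general P RX κ hκprob σ φ g hgmeas L hL hgLip hgBdd
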